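/- Let I = (y² − x⁵, z − x³) ⊆ ℝ[x,y,z] and A = ℝ[x,y,z]/I. The polynomial z is nonnegative on V_ℝ(I), but its image in A is not strongly nonnegative at P = (0,0,0): the ℝ-algebra homomorphism φ : A → ℝ[ε]/(ε⁴) at P with φ(x) = −ε, φ(y) = 0, φ(z) = −ε³ sends z to −ε³, which is not nonnegative. Consequently, z is not k-sos modulo I for any k, and I is not (1,k)-sos for any k ≥ 1. -/

import Mathlib

open MvPolynomial Polynomial

noncomputable section

/-- The ring `ℝ[ε]/(ε^m)`. -/
abbrev Eps (m : ℕ) : Type := AdjoinRoot ((Polynomial.X : Polynomial ℝ) ^ m)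

/-- An element `a₀ + a₁ε + ⋯ + a_{m-1}ε^{m-1}` of `ℝ[ε]/(ε^m)` is nonnegative if it is zero
or `a_N > 0` where `N = min {j : a_j ≠ 0}` (equivalently some, or any, polynomial
representative of it has positive lowest-order nonzero coefficient). -/
def EpsNonneg {m : ℕ} (z : Eps m) : Prop :=
  z = 0 ∨ ∃ p : Polynomial ℝ, AdjoinRoot.mk _ p = z ∧ 0 < p.coeff p.natTrailingDegree

/-- The real vanishing set `V_ℝ(I) ⊆ ℝⁿ` of an ideal `I ⊆ ℝ[x₁,…,xₙ]`. -/
def realVariety {n : ℕ} (I : Ideal (MvPolynomial (Fin n) ℝ)) : Set (Fin n → ℝ) :=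
  {P | ∀ p ∈ I, MvPolynomial.eval P p = 0}

/-- An `ℝ`-algebra homomorphism `φ : A → ℝ[ε]/(ε^m)` is at `P` if composing it with the
unique `ℝ`-algebra homomorphism `ℝ[ε]/(ε^m) → ℝ` gives evaluation at `P`; i.e. for every `p`,
`φ(p mod I)` agrees with `eval P p` modulo the ideal `(ε)`. -/
def AtPoint {n m : ℕ} (I : Ideal (MvPolynomial (Fin n) ℝ)) (P : Fin n → ℝ)
    (φ : (MvPolynomial (Fin n) ℝ ⧸ I) →ₐ[ℝ] Eps m) : Prop :=
  ∀ p : MvPolynomial (Fin n) ℝ,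
    φ (Ideal.Quotient.mk I p) - algebraMap ℝ (Eps m) (MvPolynomial.eval P p)
      ∈ Ideal.span {AdjoinRoot.root ((Polynomial.X : Polynomial ℝ) ^ m)}

/-- `f ∈ A = ℝ[x₁,…,xₙ]/I` is strongly nonnegative at `P` if for every `m` and every
`ℝ`-algebra homomorphism `φ : A → ℝ[ε]/(ε^m)` at `P`, `φ(f)` is nonnegative. -/
def StronglyNonnegAt {n : ℕ} (I : Ideal (MvPolynomial (Fin n) ℝ)) (P : Fin n → ℝ)
    (f : MvPolynomial (Fin n) ℝ ⧸ I) : Prop :=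
  ∀ (m : ℕ) (φ : (MvPolynomial (Fin n) ℝ ⧸ I) →ₐ[ℝ] Eps m),
    AtPoint I P φ → EpsNonneg (φ f)

/-- `f` is strongly nonnegative on `V(I)` if it is strongly nonnegative at every `P ∈ V_ℝ(I)`. -/
def StronglyNonneg {n : ℕ} (I : Ideal (MvPolynomial (Fin n) ℝ))
    (f : MvPolynomial (Fin n) ℝ ⧸ I) : Prop :=
  ∀ P ∈ realVariety I, StronglyNonnegAt I P f

/-- `f` is `k`-sos modulo `I`: `f ≡ Σᵢ gᵢ² (mod I)` with each `deg gᵢ ≤ k`. -/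
def KSosMod {n : ℕ} (I : Ideal (MvPolynomial (Fin n) ℝ)) (k : ℕ)
    (f : MvPolynomial (Fin n) ℝ) : Prop :=
  ∃ (r : ℕ) (g : Fin r → MvPolynomial (Fin n) ℝ),
    (∀ i, (g i).totalDegree ≤ k) ∧ f - ∑ i, (g i) ^ 2 ∈ I

/-- `f` is a sum of squares modulo `I` (no degree bound). -/
def SosMod {n : ℕ} (I : Ideal (MvPolynomial (Fin n) ℝ)) (f : MvPolynomial (Fin n) ℝ) : Prop :=
  ∃ (r : ℕ) (g : Fin r → MvPolynomial (Fin n) ℝ), f - ∑ i, (g i) ^ 2 ∈ I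

/-- `I` is `(d,k)`-sos: every polynomial of degree at most `d` which is nonnegative on
`V_ℝ(I)` is `k`-sos modulo `I`. -/
def IsDKSos {n : ℕ} (I : Ideal (MvPolynomial (Fin n) ℝ)) (d k : ℕ) : Prop :=
  ∀ f : MvPolynomial (Fin n) ℝ, f.totalDegree ≤ d →
    (∀ P ∈ realVariety I, 0 ≤ MvPolynomial.eval P f) → KSosMod I k f

/-- `I` is weakly `(1,k)`-sos: every polynomial of degree at most `1` whose image in
`A = ℝ[x]/I` is strongly nonnegative on `V(I)` is `k`-sos modulo `I`. -/
def WeaklyOneKSos {n : ℕ} (I : Ideal (MvPolynomial (Fin n) ℝ)) (k : ℕ) : Prop :=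
  ∀ f : MvPolynomial (Fin n) ℝ, f.totalDegree ≤ 1 →
    StronglyNonneg I (Ideal.Quotient.mk I f) → KSosMod I k f

/-- The maximal ideal `m_P ⊆ A = ℝ[x]/I` of functions vanishing at `P`. -/
def mIdeal {n : ℕ} (I : Ideal (MvPolynomial (Fin n) ℝ)) (P : Fin n → ℝ) :
    Ideal (MvPolynomial (Fin n) ℝ ⧸ I) :=
  Ideal.map (Ideal.Quotient.mk I) (RingHom.ker (MvPolynomial.eval P))

/-- A commutative ring is a regular local ring if it is Noetherian, local, and the dimension
of its cotangent space (equivalently, of its tangent space) over the residue field equals its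
Krull dimension. -/
def IsRegularLocal (R : Type) [CommRing R] : Prop :=
  IsNoetherianRing R ∧ ∃ _h : IsLocalRing R,
    (Module.finrank (IsLocalRing.ResidueField R) (IsLocalRing.CotangentSpace R) :
      WithBot (WithTop ℕ)) = ringKrullDim R

/-- `V(I)` is nonsingular at `P` if the localization of `A = ℝ[x]/I` at the maximal ideal
`m_P` is a regular local ring. -/
def IsNonsingularAt {n : ℕ} (I : Ideal (MvPolynomial (Fin n) ℝ)) (P : Fin n → ℝ) : Prop :=
  ∃ hp : (mIdeal I P).IsPrime, IsRegularLocal (@Localization.AtPrime _ _ (mIdeal I P) hp)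

/-- The tangent space of `V(I)` at `P`, viewed as the set of vectors `v ∈ ℝⁿ` such that there
is an `ℝ`-algebra homomorphism `A → ℝ[ε]/(ε²)` at `P` sending each `xᵢ` to `Pᵢ + vᵢ ε`. -/
def tangentVectors {n : ℕ} (I : Ideal (MvPolynomial (Fin n) ℝ)) (P : Fin n → ℝ) :
    Set (Fin n → ℝ) :=
  {v | ∃ φ : (MvPolynomial (Fin n) ℝ ⧸ I) →ₐ[ℝ] Eps 2,
    ∀ i : Fin n, φ (Ideal.Quotient.mk I (MvPolynomial.X i)) =
      algebraMap ℝ (Eps 2) (P i) + (v i) • AdjoinRoot.root ((Polynomial.X : Polynomial ℝ) ^ 2)}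

/-- `P ∈ V_ℝ(I)` is convex-singular: `P` is a singular point of `V(I)`, lies on the relative
boundary of `conv(V_ℝ(I))`, and the (affine) tangent space at `P` meets the relative interior
of `conv(V_ℝ(I))`. -/
def ConvexSingular {n : ℕ} (I : Ideal (MvPolynomial (Fin n) ℝ)) (P : Fin n → ℝ) : Prop :=
  ¬ IsNonsingularAt I P ∧
  P ∈ intrinsicFrontier ℝ (convexHull ℝ (realVariety I)) ∧
  ∃ v ∈ tangentVectors I P, P + v ∈ intrinsicInterior ℝ (convexHull ℝ (realVariety I))

/-- The `k`-th theta body of `I`. -/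
def thetaBody {n : ℕ} (I : Ideal (MvPolynomial (Fin n) ℝ)) (k : ℕ) : Set (Fin n → ℝ) :=
  {x | ∀ f : MvPolynomial (Fin n) ℝ, f.totalDegree ≤ 1 → KSosMod I k f →
    0 ≤ MvPolynomial.eval x f}

/-- `I` is `TH_k`-exact if the `k`-th theta body equals the closure of the convex hull of
`V_ℝ(I)`. -/
def ThetaExact {n : ℕ} (I : Ideal (MvPolynomial (Fin n) ℝ)) (k : ℕ) : Prop :=
  thetaBody I k = closure (convexHull ℝ (realVariety I))

/-- `I` is real radical: whenever `f^(2m) + Σᵢ gᵢ² ∈ I` for some `m ≥ 1`, we have `f ∈ I`. -/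
def IsRealRadical {n : ℕ} (I : Ideal (MvPolynomial (Fin n) ℝ)) : Prop :=
  ∀ f : MvPolynomial (Fin n) ℝ,
    (∃ m : ℕ, 1 ≤ m ∧ ∃ (r : ℕ) (g : Fin r → MvPolynomial (Fin n) ℝ),
      f ^ (2 * m) + ∑ i, (g i) ^ 2 ∈ I) → f ∈ I

/-- A formal power series is nonnegative if it is zero or its leading (lowest-order nonzero)
coefficient is positive. -/
def PSNonneg (F : PowerSeries ℝ) : Prop :=
  F = 0 ∨ ∃ N : ℕ, 0 < PowerSeries.coeff (R := ℝ) N F ∧ ∀ j < N, PowerSeries.coeff (R := ℝ) j F = 0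

/-- An `ℝ`-algebra homomorphism `φ : A → ℝ[[t]]` is at `P` if the preimage of the ideal `(t)`
is the maximal ideal of functions vanishing at `P`. -/
def PSAtPoint {n : ℕ} (I : Ideal (MvPolynomial (Fin n) ℝ)) (P : Fin n → ℝ)
    (φ : (MvPolynomial (Fin n) ℝ ⧸ I) →ₐ[ℝ] PowerSeries ℝ) : Prop :=
  ∀ p : MvPolynomial (Fin n) ℝ,
    (PowerSeries.constantCoeff (R := ℝ) (φ (Ideal.Quotient.mk I p)) = 0 ↔ MvPolynomial.eval P p = 0)

/-- The linear function induced by a polynomial `f` (of degree at most 1) on tangent vectors: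
`v ↦ Σᵢ (∂f/∂xᵢ) vᵢ`. -/
def linGrad {n : ℕ} (f : MvPolynomial (Fin n) ℝ) (v : Fin n → ℝ) : ℝ :=
  ∑ i : Fin n, MvPolynomial.eval (0 : Fin n → ℝ) (MvPolynomial.pderiv i f) * v i

end

/-! On `V_ℝ(I)` we have `y² = x⁵`, so `x ≥ 0` and `z = x³ ≥ 0`. In `ℝ[ε]/(ε⁴)` however
`x ↦ -ε, y ↦ 0, z ↦ -ε³` respects both relations (as `ε⁵ = 0`), and `-ε³` has negative
lowest-order coefficient. A sum of squares modulo `I` is sent by every such homomorphism to a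
sum of squares in `ℝ[ε]/(ε^m)`, which is nonnegative because the lowest-order coefficient of a
nonzero sum of squares of real polynomials is positive; so `z` is not a sum of squares modulo `I`
in any degree. -/

namespace Polynomial

variable {R : Type*}

section Semiring

variable [Semiring R] {p q : R[X]} {n : ℕ}

theorem natTrailingDegree_eq_of_coeff_ne_zero (hn : p.coeff n ≠ 0)
    (hlt : ∀ j < n, p.coeff j = 0) : p.natTrailingDegree = n :=
  le_antisymm (natTrailingDegree_le_of_ne_zero hn)
    (le_natTrailingDegree (fun hp => hn (by simp [hp])) hlt)

theorem trailingCoeff_eq_of_coeff_ne_zero (hn : p.coeff n ≠ 0)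
    (hlt : ∀ j < n, p.coeff j = 0) : p.trailingCoeff = p.coeff n := by
  rw [trailingCoeff, natTrailingDegree_eq_of_coeff_ne_zero hn hlt]

end Semiring

theorem trailingCoeff_eq_of_X_pow_dvd_sub [Ring R] {p q : R[X]} {m : ℕ} (h : X ^ m ∣ p - q)
    (hq : q ≠ 0) (hqm : q.natTrailingDegree < m) : p.trailingCoeff = q.trailingCoeff := by
  have hpq : ∀ j < m, p.coeff j = q.coeff j := fun j hj => by
    simpa [sub_eq_zero] using (X_pow_dvd_iff.mp h) j hj
  rw [trailingCoeff_eq_of_coeff_ne_zero (n := q.natTrailingDegree)]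
  · exact hpq _ hqm
  · rw [hpq _ hqm]
    exact coeff_natTrailingDegree_ne_zero.mpr hq
  · intro j hj
    rw [hpq j (hj.trans hqm)]
    exact coeff_eq_zero_of_lt_natTrailingDegree hj

section OrderedRing

variable [Ring R] [LinearOrder R] [IsStrictOrderedRing R] {p q : R[X]}

theorem trailingCoeff_add_nonneg (hp : 0 ≤ p.trailingCoeff) (hq : 0 ≤ q.trailingCoeff) :
    0 ≤ (p + q).trailingCoeff := by
  wlog hpq : p.natTrailingDegree ≤ q.natTrailingDegree generalizing p q
  · rw [add_comm]
    exact this hq hp (le_of_not_ge hpq)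
  rcases eq_or_ne p 0 with rfl | hp0
  · simpa using hq
  have hp_pos : 0 < p.trailingCoeff :=
    hp.lt_of_ne (trailingCoeff_nonzero_iff_nonzero.mpr hp0).symm
  have hq_coeff : 0 ≤ q.coeff p.natTrailingDegree := by
    rcases hpq.lt_or_eq with hlt | heq
    · rw [coeff_eq_zero_of_lt_natTrailingDegree hlt]
    · rwa [heq]
  have hsum_pos : 0 < (p + q).coeff p.natTrailingDegree := by
    rw [coeff_add]
    exact add_pos_of_pos_of_nonneg hp_pos hq_coeff
  rw [trailingCoeff_eq_of_coeff_ne_zero hsum_pos.ne']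
  · exact hsum_pos.le
  · intro j hj
    rw [coeff_add, coeff_eq_zero_of_lt_natTrailingDegree hj,
      coeff_eq_zero_of_lt_natTrailingDegree (hj.trans_le hpq), add_zero]

theorem trailingCoeff_sq_nonneg (p : R[X]) : 0 ≤ (p ^ 2).trailingCoeff := by
  rw [sq, trailingCoeff_mul]
  exact mul_self_nonneg _

theorem trailingCoeff_sum_sq_nonneg {ι : Type*} (s : Finset ι) (f : ι → R[X]) :
    0 ≤ (∑ i ∈ s, f i ^ 2).trailingCoeff :=
  Finset.sum_induction _ (fun p : R[X] => 0 ≤ p.trailingCoeff)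
    (fun _ _ => trailingCoeff_add_nonneg) (by simp) fun i _ => trailingCoeff_sq_nonneg (f i)

end OrderedRing

end Polynomial

theorem epsNonneg_mk_of_trailingCoeff_nonneg {m : ℕ} {q : ℝ[X]} (hq : 0 ≤ q.trailingCoeff) :
    EpsNonneg (AdjoinRoot.mk (Polynomial.X ^ m : ℝ[X]) q) := by
  rcases eq_or_ne q 0 with rfl | hq0
  · exact Or.inl (map_zero _)
  · exact Or.inr ⟨q, rfl, hq.lt_of_ne (trailingCoeff_nonzero_iff_nonzero.mpr hq0).symm⟩

theorem epsNonneg_mk_iff {m : ℕ} {q : ℝ[X]} (hq : q ≠ 0) (hqm : q.natTrailingDegree < m) :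
    EpsNonneg (AdjoinRoot.mk (Polynomial.X ^ m : ℝ[X]) q) ↔ 0 < q.trailingCoeff := by
  refine ⟨?_, fun h => Or.inr ⟨q, rfl, h⟩⟩
  rintro (hzero | ⟨p, hpq, hp⟩)
  · have := (X_pow_dvd_iff.mp (AdjoinRoot.mk_eq_zero.mp hzero)) _ hqm
    exact absurd this (coeff_natTrailingDegree_ne_zero.mpr hq)
  · rwa [← trailingCoeff_eq_of_X_pow_dvd_sub (AdjoinRoot.mk_eq_mk.mp hpq) hq hqm]

theorem not_epsNonneg_neg_root_pow {m j : ℕ} (hj : j < m) :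
    ¬ EpsNonneg (-AdjoinRoot.root (Polynomial.X ^ m : ℝ[X]) ^ j) := by
  have hmk : -AdjoinRoot.root (Polynomial.X ^ m : ℝ[X]) ^ j =
      AdjoinRoot.mk (Polynomial.X ^ m) (-Polynomial.X ^ j) := by
    simp
  rw [hmk, epsNonneg_mk_iff (by simp) (by simpa using hj)]
  simp [trailingCoeff]

theorem epsNonneg_sum_sq {m : ℕ} {ι : Type*} (s : Finset ι) (a : ι → Eps m) :
    EpsNonneg (∑ i ∈ s, a i ^ 2) := by
  choose f hf using fun i => AdjoinRoot.mk_surjective (a i)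
  have hsum : ∑ i ∈ s, a i ^ 2 = AdjoinRoot.mk (Polynomial.X ^ m : ℝ[X]) (∑ i ∈ s, f i ^ 2) := by
    simp [hf]
  rw [hsum]
  exact epsNonneg_mk_of_trailingCoeff_nonneg (trailingCoeff_sum_sq_nonneg s f)

theorem SosMod.stronglyNonnegAt {n : ℕ} {I : Ideal (MvPolynomial (Fin n) ℝ)}
    {f : MvPolynomial (Fin n) ℝ} (hf : SosMod I f) (P : Fin n → ℝ) :
    StronglyNonnegAt I P (Ideal.Quotient.mk I f) := by
  obtain ⟨r, g, hg⟩ := hf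
  intro m φ _
  rw [Ideal.Quotient.eq.mpr hg, map_sum, map_sum]
  simp only [map_pow]
  exact epsNonneg_sum_sq _ _

theorem KSosMod.sosMod {n k : ℕ} {I : Ideal (MvPolynomial (Fin n) ℝ)}
    {f : MvPolynomial (Fin n) ℝ} (hf : KSosMod I k f) : SosMod I f :=
  let ⟨r, g, _, hg⟩ := hf
  ⟨r, g, hg⟩

theorem atPoint_of_forall_X {n m : ℕ} {I : Ideal (MvPolynomial (Fin n) ℝ)} {P : Fin n → ℝ}
    {φ : (MvPolynomial (Fin n) ℝ ⧸ I) →ₐ[ℝ] Eps m}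
    (h : ∀ i, φ (Ideal.Quotient.mk I (MvPolynomial.X i)) - algebraMap ℝ (Eps m) (P i) ∈
      Ideal.span {AdjoinRoot.root (Polynomial.X ^ m : ℝ[X])}) :
    AtPoint I P φ := by
  set J := Ideal.span {AdjoinRoot.root (Polynomial.X ^ m : ℝ[X])}
  have hcomp : (Ideal.Quotient.mkₐ ℝ J).comp (φ.comp (Ideal.Quotient.mkₐ ℝ I)) =
      (Ideal.Quotient.mkₐ ℝ J).comp ((Algebra.ofId ℝ (Eps m)).comp (MvPolynomial.aeval P)) := by
    ext i
    simpa [Ideal.Quotient.eq] using h i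
  intro p
  rw [← Ideal.Quotient.eq]
  simpa using congr($hcomp p)

local notation "ε" => AdjoinRoot.root (Polynomial.X ^ 4 : ℝ[X])

noncomputable def squigglyIdeal : Ideal (MvPolynomial (Fin 3) ℝ) :=
  Ideal.span {MvPolynomial.X 1 ^ 2 - MvPolynomial.X 0 ^ 5,
    MvPolynomial.X 2 - MvPolynomial.X 0 ^ 3}

theorem eval_X_two_nonneg_of_mem_realVariety {Q : Fin 3 → ℝ}
    (hQ : Q ∈ realVariety squigglyIdeal) :
    0 ≤ MvPolynomial.eval Q (MvPolynomial.X 2) := by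
  have hy := hQ _ (Ideal.subset_span (Set.mem_insert _ _))
  have hz := hQ _ (Ideal.subset_span (Set.mem_insert_of_mem _ rfl))
  simp only [map_sub, map_pow, MvPolynomial.eval_X, sub_eq_zero] at hy hz
  have hx : 0 ≤ Q 0 := (Odd.pow_nonneg_iff (by decide : Odd 5)).mp (hy ▸ sq_nonneg (Q 1))
  rw [MvPolynomial.eval_X, hz]
  positivity

noncomputable def squigglyHom : (MvPolynomial (Fin 3) ℝ ⧸ squigglyIdeal) →ₐ[ℝ] Eps 4 :=
  Ideal.Quotient.liftₐ _ (MvPolynomial.aeval ![-ε, 0, -ε ^ 3]) fun a ha => by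
    refine (Ideal.span_le (I := RingHom.ker _)).mpr ?_ ha
    have hε : ε ^ 4 = 0 := by
      rw [← AdjoinRoot.mk_X, ← map_pow, AdjoinRoot.mk_self]
    simp [Set.insert_subset_iff]
    constructor
    · linear_combination (-ε) * hε
    · ring

theorem squigglyHom_mk (p : MvPolynomial (Fin 3) ℝ) :
    squigglyHom (Ideal.Quotient.mk _ p) = MvPolynomial.aeval ![-ε, 0, -ε ^ 3] p :=
  rfl

theorem atPoint_squigglyHom : AtPoint squigglyIdeal 0 squigglyHom := by
  refine atPoint_of_forall_X fun i => ?_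
  fin_cases i <;> simp [squigglyHom_mk, Ideal.mem_span_singleton]

/-- For `I = (y² − x⁵, z − x³) ⊆ ℝ[x,y,z]`: the polynomial `z` is nonnegative on `V_ℝ(I)`,
but its image in `A` is not strongly nonnegative at `P = (0,0,0)`, as witnessed by the
homomorphism `φ : A → ℝ[ε]/(ε⁴)` at `P` with `φ(x) = −ε`, `φ(y) = 0`, `φ(z) = −ε³`.
Consequently `z` is not `k`-sos modulo `I` for any `k`, and `I` is not `(1,k)`-sos for any
`k ≥ 1`. -/
theorem squiggly_example :
    ∀ I : Ideal (MvPolynomial (Fin 3) ℝ),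
      I = Ideal.span {(MvPolynomial.X 1 : MvPolynomial (Fin 3) ℝ) ^ 2 -
          (MvPolynomial.X 0) ^ 5, (MvPolynomial.X 2) - (MvPolynomial.X 0) ^ 3} →
    (∀ Q ∈ realVariety I, 0 ≤ MvPolynomial.eval Q (MvPolynomial.X 2 : MvPolynomial (Fin 3) ℝ)) ∧
    (∃ φ : (MvPolynomial (Fin 3) ℝ ⧸ I) →ₐ[ℝ] Eps 4,
      AtPoint I (0 : Fin 3 → ℝ) φ ∧
      φ (Ideal.Quotient.mk I (MvPolynomial.X 0)) =
        - AdjoinRoot.root ((Polynomial.X : Polynomial ℝ) ^ 4) ∧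
      φ (Ideal.Quotient.mk I (MvPolynomial.X 1)) = 0 ∧
      φ (Ideal.Quotient.mk I (MvPolynomial.X 2)) =
        - AdjoinRoot.root ((Polynomial.X : Polynomial ℝ) ^ 4) ^ 3 ∧
      ¬ EpsNonneg (φ (Ideal.Quotient.mk I (MvPolynomial.X 2)))) ∧
    ¬ StronglyNonnegAt I (0 : Fin 3 → ℝ)
      (Ideal.Quotient.mk I (MvPolynomial.X 2 : MvPolynomial (Fin 3) ℝ)) ∧
    (∀ k : ℕ, ¬ KSosMod I k (MvPolynomial.X 2 : MvPolynomial (Fin 3) ℝ)) ∧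
    (∀ k : ℕ, 1 ≤ k → ¬ IsDKSos I 1 k) := by
  rintro I (rfl : I = squigglyIdeal)
  have hz : squigglyHom (Ideal.Quotient.mk _ (MvPolynomial.X 2)) = -ε ^ 3 := by
    simp [squigglyHom_mk]
  have hz_neg : ¬ EpsNonneg (squigglyHom (Ideal.Quotient.mk _ (MvPolynomial.X 2))) :=
    hz ▸ not_epsNonneg_neg_root_pow (by norm_num)
  have not_strongly : ¬ StronglyNonnegAt squigglyIdeal 0
      (Ideal.Quotient.mk _ (MvPolynomial.X 2)) :=
    fun h => hz_neg (h 4 squigglyHom atPoint_squigglyHom)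
  have not_sos (k : ℕ) : ¬ KSosMod squigglyIdeal k (MvPolynomial.X 2) :=
    fun h => not_strongly (h.sosMod.stronglyNonnegAt 0)
  refine ⟨fun Q => eval_X_two_nonneg_of_mem_realVariety,
    ⟨squigglyHom, atPoint_squigglyHom, by simp [squigglyHom_mk], by simp [squigglyHom_mk], hz,
      hz_neg⟩, not_strongly, not_sos, fun k _ h => not_sos k ?_⟩
  exact h _ (MvPolynomial.totalDegree_X 2).le fun Q => eval_X_two_nonneg_of_mem_realVariety
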